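/- arXiv:math/0202128 — 5 statements merged into one kernel-verified Lean document; each statement's English description precedes it below -/
import Mathlib

section
/- Let (s, s₋, s₊) be a scattering matrix with s₋ ∈ H^∞ and ŝ₋(0) = 0, and write s(0) = ŝ(0). Suppose there exist u_n ∈ H² such that, in L²-norm: s·u_n → t̄·s₋ and P₊(s₊·u_n) → t̄·(s − s(0)). Define f_n ∈ H² by the relation t̄·f_n(t̄) = s(0)·t̄ + t̄·u_n(t̄) − P₋(s₊·u_n), and set g_n = f_n − (1 − t²)·u_n. Then, in L²-norm: s·f_n → 1 + t̄·s₋, s₊·f_n + t̄·f_n(t̄) → t̄·s, s·g_n → 1 + t·s₋, and t̄·s₊·g_n + g_n(t̄) → s. -/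
open MeasureTheory Filter AddCircle
open scoped Real ComplexConjugate

noncomputable section

instance : Fact (0 < 2 * π) := ⟨Real.two_pi_pos⟩

/-- The unit circle, modeled additively as `ℝ / (2π)ℤ`; the point `θ` corresponds to
`t = e^{iθ} ∈ 𝕋 ⊆ ℂ`, so that `t ↦ tⁿ` is `fourier n`, and `t ↦ f(t̄)` is `θ ↦ f (-θ)`. -/
abbrev CircleT := AddCircle (2 * π)

/-- Normalized Haar (arc-length) measure `m` on the circle. -/
abbrev mT : Measure CircleT := haarAddCircle

/-- `s, s₋, s₊ ∈ L^∞(𝕋)` form a unitary symmetric S-matrix: a.e. the matrix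
`[[s₋, s], [s, s₊]]` is unitary and each entry `x` satisfies `conj (x(t̄)) = x(t)`. -/
def IsSMatrix (s sm sp : CircleT → ℂ) : Prop :=
  MemLp s ⊤ mT ∧ MemLp sm ⊤ mT ∧ MemLp sp ⊤ mT ∧
  (∀ᵐ θ ∂mT, !![sm θ, s θ; s θ, sp θ] ∈ Matrix.unitaryGroup (Fin 2) ℂ) ∧
  (∀ᵐ θ ∂mT, conj (s (-θ)) = s θ) ∧
  (∀ᵐ θ ∂mT, conj (sm (-θ)) = sm θ) ∧
  (∀ᵐ θ ∂mT, conj (sp (-θ)) = sp θ)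

/-- `s` is an outer function: no negative Fourier coefficients, `log |s| ∈ L¹`, `ŝ(0) ≠ 0`
and `log |ŝ(0)| = ∫ log |s| dm`. -/
def IsOuter (s : CircleT → ℂ) : Prop :=
  (∀ n : ℤ, n < 0 → fourierCoeff s n = 0) ∧
  Integrable (fun θ => Real.log ‖s θ‖) mT ∧
  fourierCoeff s 0 ≠ 0 ∧
  Real.log ‖fourierCoeff s 0‖ = ∫ θ, Real.log ‖s θ‖ ∂mT

/-- `f` belongs to the Hardy space `H²`: square-integrable and all negative Fourier
coefficients vanish. -/
def MemH2 (f : CircleT → ℂ) : Prop :=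
  MemLp f 2 mT ∧ ∀ n : ℤ, n < 0 → fourierCoeff f n = 0

/-- `h = P₊ g` is the Riesz projection of `g` onto `H²`, characterized by its
Fourier coefficients. -/
def IsRiesz (g h : CircleT → ℂ) : Prop :=
  MemLp h 2 mT ∧ (∀ n : ℤ, n < 0 → fourierCoeff h n = 0) ∧
  (∀ n : ℤ, 0 ≤ n → fourierCoeff h n = fourierCoeff g n)

/-- `fourier` at a negated argument. -/
lemma fourier_neg_arg (n : ℤ) (x : CircleT) : fourier n (-x) = fourier (-n) x := by
  simp [fourier_apply]

lemma norm_fourier_one (n : ℤ) (x : CircleT) : ‖fourier n x‖ = 1 := by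
  simp [fourier_apply, Circle.norm_coe]

lemma aux_norm_le {x y : ℂ} (h : x * conj x + y * conj y = 1) : ‖x‖ ≤ 1 := by
  have h2 : (Complex.normSq x : ℝ) + Complex.normSq y = 1 := by
    have := congrArg Complex.re h
    simpa [Complex.mul_conj, Complex.normSq_apply] using this
  have h3 : Complex.normSq x ≤ 1 := by nlinarith [Complex.normSq_nonneg y]
  have h4 : ‖x‖ ^ 2 ≤ 1 := by rw [Complex.sq_norm]; linarith
  nlinarith [norm_nonneg x]

/-- Squeeze: three-term decomposition with vanishing `L²` bounds. -/
lemma aux_combo (A B C T : ℕ → CircleT → ℂ)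
    (hA : ∀ n, AEStronglyMeasurable (A n) mT) (hB : ∀ n, AEStronglyMeasurable (B n) mT)
    (hC : ∀ n, AEStronglyMeasurable (C n) mT)
    (hT : ∀ n, ∀ᵐ θ ∂mT, T n θ = A n θ + B n θ + C n θ)
    (nA nB nC : ℕ → ENNReal)
    (hAn : ∀ n, eLpNorm (A n) 2 mT ≤ nA n) (hBn : ∀ n, eLpNorm (B n) 2 mT ≤ nB n)
    (hCn : ∀ n, eLpNorm (C n) 2 mT ≤ nC n)
    (ha : Tendsto nA atTop (nhds 0)) (hb : Tendsto nB atTop (nhds 0))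
    (hc : Tendsto nC atTop (nhds 0)) :
    Tendsto (fun n => eLpNorm (T n) 2 mT) atTop (nhds 0) := by
  have key : ∀ n, eLpNorm (T n) 2 mT ≤ nA n + nB n + nC n := by
    intro n
    have e : eLpNorm (T n) 2 mT = eLpNorm (fun θ => A n θ + B n θ + C n θ) 2 mT :=
      eLpNorm_congr_ae (hT n)
    rw [e]
    calc eLpNorm (fun θ => A n θ + B n θ + C n θ) 2 mT
        ≤ eLpNorm (fun θ => A n θ + B n θ) 2 mT + eLpNorm (C n) 2 mT :=
          eLpNorm_add_le ((hA n).add (hB n)) (hC n) one_le_two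
      _ ≤ eLpNorm (A n) 2 mT + eLpNorm (B n) 2 mT + eLpNorm (C n) 2 mT :=
          add_le_add_left (eLpNorm_add_le (hA n) (hB n) one_le_two) _
      _ ≤ nA n + nB n + nC n := add_le_add (add_le_add (hAn n) (hBn n)) (hCn n)
  have hlim : Tendsto (fun n => nA n + nB n + nC n) atTop (nhds 0) := by
    simpa using (ha.add hb).add hc
  exact tendsto_of_tendsto_of_tendsto_of_le_of_le tendsto_const_nhds hlim
    (fun n => zero_le) key

set_option maxHeartbeats 1000000 in
/-- Setting as in the paper's second lemma: `s₋ ∈ H^∞`, `ŝ₋(0) = 0`, and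
`u_n ∈ H²` with `s u_n → t̄ s₋` and `P₊(s₊ u_n) → t̄ (s - s(0))` in `L²`.  With
`f_n` defined by `t̄ f_n(t̄) = s(0) t̄ + t̄ u_n(t̄) - P₋(s₊ u_n)` (equivalently
`f_n(t) = s(0) + u_n(t) - t̄·(P₋(s₊u_n))(t̄)`, where `P₋(s₊u_n) = s₊u_n - P₊(s₊u_n)`)
and `g_n = f_n - (1 - t²) u_n`, one has in `L²`-norm:
`s f_n → 1 + t̄ s₋`, `s₊ f_n + t̄ f_n(t̄) → t̄ s`, `s g_n → 1 + t s₋`,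
`t̄ s₊ g_n + g_n(t̄) → s`. -/
theorem statement_6 (s sm sp : CircleT → ℂ)
    (hS : IsSMatrix s sm sp) (hout : IsOuter s)
    (hsmH : ∀ n : ℤ, n < 0 → fourierCoeff sm n = 0) (hsm0 : fourierCoeff sm 0 = 0)
    (u : ℕ → CircleT → ℂ) (hu : ∀ n, MemH2 (u n))
    (v : ℕ → CircleT → ℂ) (hv : ∀ n, IsRiesz (fun θ => sp θ * u n θ) (v n))
    (hu1 : Tendsto (fun n =>
        eLpNorm (fun θ => s θ * u n θ - fourier (-1) θ * sm θ) 2 mT) atTop (nhds 0))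
    (hu2 : Tendsto (fun n =>
        eLpNorm (fun θ => v n θ - fourier (-1) θ * (s θ - fourierCoeff s 0)) 2 mT)
        atTop (nhds 0))
    (f : ℕ → CircleT → ℂ)
    (hfdef : ∀ n θ, f n θ =
      fourierCoeff s 0 + u n θ - fourier (-1) θ * (sp (-θ) * u n (-θ) - v n (-θ)))
    (g : ℕ → CircleT → ℂ)
    (hgdef : ∀ n θ, g n θ = f n θ - (1 - fourier 2 θ) * u n θ) :
    Tendsto (fun n =>
        eLpNorm (fun θ => s θ * f n θ - (1 + fourier (-1) θ * sm θ)) 2 mT) atTop (nhds 0) ∧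
    Tendsto (fun n =>
        eLpNorm (fun θ => sp θ * f n θ + fourier (-1) θ * f n (-θ) - fourier (-1) θ * s θ) 2 mT)
      atTop (nhds 0) ∧
    Tendsto (fun n =>
        eLpNorm (fun θ => s θ * g n θ - (1 + fourier 1 θ * sm θ)) 2 mT) atTop (nhds 0) ∧
    Tendsto (fun n =>
        eLpNorm (fun θ => fourier (-1) θ * sp θ * g n θ + g n (-θ) - s θ) 2 mT)
      atTop (nhds 0) := by
  obtain ⟨hsL, hsmL, hspL, hUni, hsyms, hsymm, hsymp⟩ := hS
  have hneg : MeasurePreserving (fun θ : CircleT => -θ) mT mT :=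
    Measure.measurePreserving_neg mT
  have ms : AEStronglyMeasurable s mT := hsL.aestronglyMeasurable
  have msm : AEStronglyMeasurable sm mT := hsmL.aestronglyMeasurable
  have msp : AEStronglyMeasurable sp mT := hspL.aestronglyMeasurable
  have mu : ∀ n, AEStronglyMeasurable (u n) mT := fun n => (hu n).1.aestronglyMeasurable
  have mv : ∀ n, AEStronglyMeasurable (v n) mT := fun n => (hv n).1.aestronglyMeasurable
  have mf : ∀ k : ℤ, AEStronglyMeasurable (fun θ : CircleT => fourier k θ) mT :=
    fun k => (map_continuous (fourier k)).aestronglyMeasurable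
  have mcomp : ∀ (F : CircleT → ℂ), AEStronglyMeasurable F mT →
      AEStronglyMeasurable (fun θ => F (-θ)) mT :=
    fun F hF => hF.comp_quasiMeasurePreserving hneg.quasiMeasurePreserving
  -- the two error functions
  have mE1 : ∀ n, AEStronglyMeasurable
      (fun θ => s θ * u n θ - fourier (-1) θ * sm θ) mT :=
    fun n => (ms.mul (mu n)).sub ((mf (-1)).mul msm)
  have mE2 : ∀ n, AEStronglyMeasurable
      (fun θ => v n θ - fourier (-1) θ * (s θ - fourierCoeff s 0)) mT :=
    fun n => (mv n).sub ((mf (-1)).mul (ms.sub aestronglyMeasurable_const))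
  have mE1n : ∀ n, AEStronglyMeasurable
      (fun θ => s (-θ) * u n (-θ) - fourier (-1) (-θ) * sm (-θ)) mT :=
    fun n => mcomp (fun θ => s θ * u n θ - fourier (-1) θ * sm θ) (mE1 n)
  have mE2n : ∀ n, AEStronglyMeasurable
      (fun θ => v n (-θ) - fourier (-1) (-θ) * (s (-θ) - fourierCoeff s 0)) mT :=
    fun n => mcomp (fun θ => v n θ - fourier (-1) θ * (s θ - fourierCoeff s 0)) (mE2 n)
  have nE1n : ∀ n, eLpNorm (fun θ => s (-θ) * u n (-θ) - fourier (-1) (-θ) * sm (-θ)) 2 mT =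
      eLpNorm (fun θ => s θ * u n θ - fourier (-1) θ * sm θ) 2 mT :=
    fun n => eLpNorm_comp_measurePreserving
      (g := fun θ => s θ * u n θ - fourier (-1) θ * sm θ) (mE1 n) hneg
  have nE2n : ∀ n, eLpNorm
      (fun θ => v n (-θ) - fourier (-1) (-θ) * (s (-θ) - fourierCoeff s 0)) 2 mT =
      eLpNorm (fun θ => v n θ - fourier (-1) θ * (s θ - fourierCoeff s 0)) 2 mT :=
    fun n => eLpNorm_comp_measurePreserving
      (g := fun θ => v n θ - fourier (-1) θ * (s θ - fourierCoeff s 0)) (mE2 n) hneg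
  have hmulbd : ∀ (c F : CircleT → ℂ), (∀ᵐ θ ∂mT, ‖c θ‖ ≤ 1) →
      eLpNorm (fun θ => c θ * F θ) 2 mT ≤ eLpNorm F 2 mT := by
    intro c F hc
    refine eLpNorm_mono_ae ?_
    filter_upwards [hc] with θ h
    rw [norm_mul]
    exact mul_le_of_le_one_left (norm_nonneg _) h
  -- the algebraic relations from unitarity
  have hrel : ∀ᵐ θ ∂mT,
      sm θ * conj (sm θ) + s θ * conj (s θ) = 1 ∧
      sm θ * conj (s θ) + s θ * conj (sp θ) = 0 ∧
      s θ * conj (sm θ) + sp θ * conj (s θ) = 0 ∧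
      s θ * conj (s θ) + sp θ * conj (sp θ) = 1 := by
    filter_upwards [hUni] with θ hU
    have h' := (Matrix.mem_unitaryGroup_iff.mp hU)
    have h00 : ((!![sm θ, s θ; s θ, sp θ] * star !![sm θ, s θ; s θ, sp θ]) 0 0)
        = (1 : Matrix (Fin 2) (Fin 2) ℂ) 0 0 := by rw [h']
    have h01 : ((!![sm θ, s θ; s θ, sp θ] * star !![sm θ, s θ; s θ, sp θ]) 0 1)
        = (1 : Matrix (Fin 2) (Fin 2) ℂ) 0 1 := by rw [h']
    have h10 : ((!![sm θ, s θ; s θ, sp θ] * star !![sm θ, s θ; s θ, sp θ]) 1 0)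
        = (1 : Matrix (Fin 2) (Fin 2) ℂ) 1 0 := by rw [h']
    have h11 : ((!![sm θ, s θ; s θ, sp θ] * star !![sm θ, s θ; s θ, sp θ]) 1 1)
        = (1 : Matrix (Fin 2) (Fin 2) ℂ) 1 1 := by rw [h']
    have e00 : !![sm θ, s θ; s θ, sp θ] 0 0 = sm θ := by simp
    have e01 : !![sm θ, s θ; s θ, sp θ] 0 1 = s θ := by simp
    have e10 : !![sm θ, s θ; s θ, sp θ] 1 0 = s θ := by simp
    have e11 : !![sm θ, s θ; s θ, sp θ] 1 1 = sp θ := by simp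
    simp only [Matrix.mul_apply, Fin.sum_univ_two, Matrix.star_apply, RCLike.star_def,
      e00, e01, e10, e11, Matrix.one_apply_eq, Fin.isValue, ne_eq, zero_ne_one,
      not_false_eq_true, Matrix.one_apply_ne, one_ne_zero] at h00 h01 h10 h11
    exact ⟨by linear_combination h00, by linear_combination h01,
      by linear_combination h10, by linear_combination h11⟩
  -- norm bounds
  have hbs : ∀ᵐ θ ∂mT, ‖s θ‖ ≤ 1 := by
    filter_upwards [hrel] with θ h
    exact aux_norm_le (x := s θ) (y := sm θ) (by linear_combination h.1)
  have hbsm : ∀ᵐ θ ∂mT, ‖sm θ‖ ≤ 1 := by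
    filter_upwards [hrel] with θ h
    exact aux_norm_le (x := sm θ) (y := s θ) h.1
  have hbsp : ∀ᵐ θ ∂mT, ‖sp θ‖ ≤ 1 := by
    filter_upwards [hrel] with θ h
    exact aux_norm_le (x := sp θ) (y := s θ) (by linear_combination h.2.2.2)
  have hc1 : ∀ᵐ θ ∂mT, ‖fourier (-1) θ * sm θ‖ ≤ 1 := by
    filter_upwards [hbsm] with θ h
    rw [norm_mul, norm_fourier_one, one_mul]; exact h
  have hc2 : ∀ᵐ θ ∂mT, ‖fourier (-1) θ * s θ‖ ≤ 1 := by
    filter_upwards [hbs] with θ h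
    rw [norm_mul, norm_fourier_one, one_mul]; exact h
  have hc3 : ∀ᵐ θ ∂mT, ‖fourier (-1) θ * sp θ‖ ≤ 1 := by
    filter_upwards [hbsp] with θ h
    rw [norm_mul, norm_fourier_one, one_mul]; exact h
  have hc4 : ∀ᵐ θ ∂mT, ‖(fourier (2 : ℤ) θ : ℂ)‖ ≤ 1 :=
    Filter.Eventually.of_forall fun θ => le_of_eq (norm_fourier_one 2 θ)
  have hc5 : ∀ᵐ θ ∂mT, ‖(fourier (1 : ℤ) θ : ℂ)‖ ≤ 1 :=
    Filter.Eventually.of_forall fun θ => le_of_eq (norm_fourier_one 1 θ)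
  have hc6 : ∀ᵐ θ ∂mT, ‖fourier (-1) θ * fourier (-1) θ * s θ‖ ≤ 1 := by
    filter_upwards [hbs] with θ h
    rw [norm_mul, norm_mul, norm_fourier_one, one_mul, one_mul]; exact h
  have hc7 : ∀ᵐ θ ∂mT, ‖fourier (-1) θ * fourier (-1) θ * sp θ‖ ≤ 1 := by
    filter_upwards [hbsp] with θ h
    rw [norm_mul, norm_mul, norm_fourier_one, one_mul, one_mul]; exact h
  -- pointwise facts used in all identities
  have hptwise : ∀ᵐ θ ∂mT,
      (sm θ * conj (sm θ) + s θ * conj (s θ) = 1 ∧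
       sm θ * conj (s θ) + s θ * conj (sp θ) = 0 ∧
       s θ * conj (sm θ) + sp θ * conj (s θ) = 0 ∧
       s θ * conj (s θ) + sp θ * conj (sp θ) = 1) ∧
      s (-θ) = conj (s θ) ∧ sm (-θ) = conj (sm θ) ∧ sp (-θ) = conj (sp θ) := by
    filter_upwards [hrel, hsyms, hsymm, hsymp] with θ hr h1 h2 h3
    refine ⟨hr, ?_, ?_, ?_⟩
    · rw [← h1]; simp
    · rw [← h2]; simp
    · rw [← h3]; simp
  refine ⟨?_, ?_, ?_, ?_⟩
  -- Goal 1 : s f_n → 1 + t̄ s₋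
  · refine aux_combo
      (fun n θ => s θ * u n θ - fourier (-1) θ * sm θ)
      (fun n θ => (fourier (-1) θ * sm θ) *
        (s (-θ) * u n (-θ) - fourier (-1) (-θ) * sm (-θ)))
      (fun n θ => (fourier (-1) θ * s θ) *
        (v n (-θ) - fourier (-1) (-θ) * (s (-θ) - fourierCoeff s 0)))
      _ mE1 (fun n => ((mf (-1)).mul msm).mul (mE1n n))
      (fun n => ((mf (-1)).mul ms).mul (mE2n n)) ?_
      (fun n => eLpNorm (fun θ => s θ * u n θ - fourier (-1) θ * sm θ) 2 mT)
      (fun n => eLpNorm (fun θ => s θ * u n θ - fourier (-1) θ * sm θ) 2 mT)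
      (fun n => eLpNorm (fun θ => v n θ - fourier (-1) θ * (s θ - fourierCoeff s 0)) 2 mT)
      (fun n => le_rfl)
      (fun n => le_trans (hmulbd _ _ hc1) (le_of_eq (nE1n n)))
      (fun n => le_trans (hmulbd _ _ hc2) (le_of_eq (nE2n n)))
      hu1 hu1 hu2
    intro n
    filter_upwards [hptwise] with θ h
    obtain ⟨⟨r1, r2, r2p, r3⟩, es, esm, esp⟩ := h
    have eT : fourier (-1) (-θ) = fourier 1 θ := by
      rw [fourier_neg_arg]; norm_num
    have hTT : fourier (-1) θ * fourier 1 θ = 1 := by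
      rw [← fourier_add]; norm_num
    rw [hfdef n θ, es, esm, esp, eT]
    linear_combination (-(fourier (-1) θ * u n (-θ))) * r2 +
      (fourier (-1) θ * fourier 1 θ) * r1 + (1 - s θ * fourierCoeff s 0) * hTT
  -- Goal 2 : s₊ f_n + t̄ f_n(t̄) → t̄ s
  · refine aux_combo
      (fun n θ => (fourier (-1) θ * s θ) *
        (s (-θ) * u n (-θ) - fourier (-1) (-θ) * sm (-θ)))
      (fun n θ => v n θ - fourier (-1) θ * (s θ - fourierCoeff s 0))
      (fun n θ => (fourier (-1) θ * sp θ) *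
        (v n (-θ) - fourier (-1) (-θ) * (s (-θ) - fourierCoeff s 0)))
      _ (fun n => ((mf (-1)).mul ms).mul (mE1n n)) mE2
      (fun n => ((mf (-1)).mul msp).mul (mE2n n)) ?_
      (fun n => eLpNorm (fun θ => s θ * u n θ - fourier (-1) θ * sm θ) 2 mT)
      (fun n => eLpNorm (fun θ => v n θ - fourier (-1) θ * (s θ - fourierCoeff s 0)) 2 mT)
      (fun n => eLpNorm (fun θ => v n θ - fourier (-1) θ * (s θ - fourierCoeff s 0)) 2 mT)
      (fun n => le_trans (hmulbd _ _ hc2) (le_of_eq (nE1n n)))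
      (fun n => le_rfl)
      (fun n => le_trans (hmulbd _ _ hc3) (le_of_eq (nE2n n)))
      hu1 hu2 hu2
    intro n
    filter_upwards [hptwise] with θ h
    obtain ⟨⟨r1, r2, r2p, r3⟩, es, esm, esp⟩ := h
    have eT : fourier (-1) (-θ) = fourier 1 θ := by
      rw [fourier_neg_arg]; norm_num
    have hTT : fourier (-1) θ * fourier 1 θ = 1 := by
      rw [← fourier_add]; norm_num
    have hf2 := hfdef n (-θ)
    rw [neg_neg] at hf2
    rw [hfdef n θ, hf2, es, esm, esp, eT]
    linear_combination (-(fourier (-1) θ * u n (-θ))) * r3 +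
      (fourier (-1) θ * fourier 1 θ) * r2p +
      (v n θ - sp θ * u n θ - sp θ * fourierCoeff s 0) * hTT
  -- Goal 3 : s g_n → 1 + t s₋
  · refine aux_combo
      (fun n θ => fourier 2 θ * (s θ * u n θ - fourier (-1) θ * sm θ))
      (fun n θ => (fourier (-1) θ * sm θ) *
        (s (-θ) * u n (-θ) - fourier (-1) (-θ) * sm (-θ)))
      (fun n θ => (fourier (-1) θ * s θ) *
        (v n (-θ) - fourier (-1) (-θ) * (s (-θ) - fourierCoeff s 0)))
      _ (fun n => (mf 2).mul (mE1 n)) (fun n => ((mf (-1)).mul msm).mul (mE1n n))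
      (fun n => ((mf (-1)).mul ms).mul (mE2n n)) ?_
      (fun n => eLpNorm (fun θ => s θ * u n θ - fourier (-1) θ * sm θ) 2 mT)
      (fun n => eLpNorm (fun θ => s θ * u n θ - fourier (-1) θ * sm θ) 2 mT)
      (fun n => eLpNorm (fun θ => v n θ - fourier (-1) θ * (s θ - fourierCoeff s 0)) 2 mT)
      (fun n => hmulbd _ _ hc4)
      (fun n => le_trans (hmulbd _ _ hc1) (le_of_eq (nE1n n)))
      (fun n => le_trans (hmulbd _ _ hc2) (le_of_eq (nE2n n)))
      hu1 hu1 hu2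
    intro n
    filter_upwards [hptwise] with θ h
    obtain ⟨⟨r1, r2, r2p, r3⟩, es, esm, esp⟩ := h
    have eT : fourier (-1) (-θ) = fourier 1 θ := by
      rw [fourier_neg_arg]; norm_num
    have hTT : fourier (-1) θ * fourier 1 θ = 1 := by
      rw [← fourier_add]; norm_num
    have hQ : fourier 2 θ = fourier 1 θ * fourier 1 θ := by
      rw [← fourier_add]; norm_num
    rw [hgdef n θ, hfdef n θ, hQ, es, esm, esp, eT]
    linear_combination (-(fourier (-1) θ * u n (-θ))) * r2 +
      (fourier (-1) θ * fourier 1 θ) * r1 +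
      (1 + fourier 1 θ * sm θ - s θ * fourierCoeff s 0) * hTT
  -- Goal 4 : t̄ s₊ g_n + g_n(t̄) → s
  · refine aux_combo
      (fun n θ => (fourier (-1) θ * fourier (-1) θ * s θ) *
        (s (-θ) * u n (-θ) - fourier (-1) (-θ) * sm (-θ)))
      (fun n θ => fourier 1 θ * (v n θ - fourier (-1) θ * (s θ - fourierCoeff s 0)))
      (fun n θ => (fourier (-1) θ * fourier (-1) θ * sp θ) *
        (v n (-θ) - fourier (-1) (-θ) * (s (-θ) - fourierCoeff s 0)))
      _ (fun n => (((mf (-1)).mul (mf (-1))).mul ms).mul (mE1n n))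
      (fun n => (mf 1).mul (mE2 n))
      (fun n => (((mf (-1)).mul (mf (-1))).mul msp).mul (mE2n n)) ?_
      (fun n => eLpNorm (fun θ => s θ * u n θ - fourier (-1) θ * sm θ) 2 mT)
      (fun n => eLpNorm (fun θ => v n θ - fourier (-1) θ * (s θ - fourierCoeff s 0)) 2 mT)
      (fun n => eLpNorm (fun θ => v n θ - fourier (-1) θ * (s θ - fourierCoeff s 0)) 2 mT)
      (fun n => le_trans (hmulbd _ _ hc6) (le_of_eq (nE1n n)))
      (fun n => hmulbd _ _ hc5)
      (fun n => le_trans (hmulbd _ _ hc7) (le_of_eq (nE2n n)))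
      hu1 hu2 hu2
    intro n
    filter_upwards [hptwise] with θ h
    obtain ⟨⟨r1, r2, r2p, r3⟩, es, esm, esp⟩ := h
    have eT : fourier (-1) (-θ) = fourier 1 θ := by
      rw [fourier_neg_arg]; norm_num
    have hTT : fourier (-1) θ * fourier 1 θ = 1 := by
      rw [← fourier_add]; norm_num
    have hQ : fourier 2 θ = fourier 1 θ * fourier 1 θ := by
      rw [← fourier_add]; norm_num
    have eQ2 : fourier 2 (-θ) = fourier (-1) θ * fourier (-1) θ := by
      rw [fourier_neg_arg, ← fourier_add]; norm_num
    have hf2 := hfdef n (-θ)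
    rw [neg_neg] at hf2
    have hg2 := hgdef n (-θ)
    rw [hgdef n θ, hg2, hf2, hfdef n θ, hQ, eQ2, es, esm, esp, eT]
    linear_combination (-(fourier (-1) θ * fourier (-1) θ * u n (-θ))) * r3 +
      (fourier (-1) θ * fourier (-1) θ * fourier 1 θ) * r2p +
      (fourier 1 θ * sp θ * u n θ - (fourier (-1) θ * sp θ + 1) * fourierCoeff s 0 + s θ) * hTT
end
end

section
/- Let (s, s₋, s₊) be a scattering matrix with s₋ ∈ H^∞ and ŝ₋(0) = 0, write s(0) = ŝ(0), and suppose u_n ∈ H² satisfy, in L²-norm: s·u_n → t̄·s₋ and P₊(s₊·u_n) → t̄·(s − s(0)). Define f_n ∈ H² by t̄·f_n(t̄) = s(0)·t̄ + t̄·u_n(t̄) − P₋(s₊·u_n). Then s·(f_n − u_n) → 1 in L²-norm. -/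
open MeasureTheory Filter AddCircle
open scoped Real ComplexConjugate

noncomputable section

set_option maxHeartbeats 1000000 in
/-- In the setting of the paper's second lemma (`s₋ ∈ H^∞`, `ŝ₋(0) = 0`,
`u_n ∈ H²` with `s u_n → t̄ s₋`, `P₊(s₊ u_n) → t̄(s - s(0))`, and `f_n` defined by
`t̄ f_n(t̄) = s(0) t̄ + t̄ u_n(t̄) - P₋(s₊ u_n)`): one has `s·(f_n - u_n) → 1` in `L²`. -/
theorem statement_7 (s sm sp : CircleT → ℂ)
    (hS : IsSMatrix s sm sp) (hout : IsOuter s)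
    (hsmH : ∀ n : ℤ, n < 0 → fourierCoeff sm n = 0) (hsm0 : fourierCoeff sm 0 = 0)
    (u : ℕ → CircleT → ℂ) (hu : ∀ n, MemH2 (u n))
    (v : ℕ → CircleT → ℂ) (hv : ∀ n, IsRiesz (fun θ => sp θ * u n θ) (v n))
    (hu1 : Tendsto (fun n =>
        eLpNorm (fun θ => s θ * u n θ - fourier (-1) θ * sm θ) 2 mT) atTop (nhds 0))
    (hu2 : Tendsto (fun n =>
        eLpNorm (fun θ => v n θ - fourier (-1) θ * (s θ - fourierCoeff s 0)) 2 mT)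
        atTop (nhds 0))
    (f : ℕ → CircleT → ℂ)
    (hfdef : ∀ n θ, f n θ =
      fourierCoeff s 0 + u n θ - fourier (-1) θ * (sp (-θ) * u n (-θ) - v n (-θ)))
    :
    Tendsto (fun n => eLpNorm (fun θ => s θ * (f n θ - u n θ) - 1) 2 mT) atTop (nhds 0) := by
  obtain ⟨hsL, hsmL, hspL, hUnit, hsym_s, hsym_sm, _⟩ := hS
  set c : ℂ := fourierCoeff s 0 with hc
  set A : ℕ → CircleT → ℂ :=
    fun n θ => s θ * u n θ - fourier (-1) θ * sm θ with hA
  set B : ℕ → CircleT → ℂ :=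
    fun n θ => v n θ - fourier (-1) θ * (s θ - c) with hB
  have hu1' : Tendsto (fun n => eLpNorm (A n) 2 mT) atTop (nhds 0) := hu1
  have hu2' : Tendsto (fun n => eLpNorm (B n) 2 mT) atTop (nhds 0) := hu2
  clear_value A B
  clear hu1 hu2
  have hneg : MeasurePreserving (fun θ : CircleT => -θ) mT mT :=
    Measure.measurePreserving_neg mT
  -- fourier facts
  have hfour : ∀ θ : CircleT, (fourier (-1) θ : ℂ) * fourier (-1) (-θ) = 1 := by
    intro θ
    have h : (fourier (-1) (-θ) : ℂ) = fourier 1 θ := by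
      rw [fourier_apply, fourier_apply]; norm_num
    rw [h, ← fourier_add]; norm_num
  have hfnorm : ∀ θ : CircleT, ‖(fourier (-1) θ : ℂ)‖ = 1 := by
    intro θ
    rw [fourier_apply]
    exact Circle.norm_coe _
  -- unitarity consequences at θ
  have hUrow : ∀ᵐ θ ∂mT, conj (sm θ) * sm θ + conj (s θ) * s θ = 1 ∧
      conj (sm θ) * s θ + conj (s θ) * sp θ = 0 := by
    filter_upwards [hUnit] with θ hθ
    have h1 := hθ.1
    have h00 : (star !![sm θ, s θ; s θ, sp θ] * !![sm θ, s θ; s θ, sp θ]) 0 0 = 1 := by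
      rw [h1]; simp
    have h01 : (star !![sm θ, s θ; s θ, sp θ] * !![sm θ, s θ; s θ, sp θ]) 0 1 = 0 := by
      rw [h1]; simp
    simp [Matrix.mul_apply, Fin.sum_univ_two, Matrix.star_apply] at h00 h01
    exact ⟨h00, h01⟩
  -- transported to -θ
  have hUrow' := hneg.quasiMeasurePreserving.ae hUrow
  have hsym_s' := hneg.quasiMeasurePreserving.ae hsym_s
  have hsym_sm' := hneg.quasiMeasurePreserving.ae hsym_sm
  -- the key pointwise identity and bounds
  have hkey : ∀ᵐ θ ∂mT, (∀ n, s θ * (f n θ - u n θ) - 1 =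
      sm θ * fourier (-1) θ * A n (-θ) + s θ * fourier (-1) θ * B n (-θ)) ∧
      ‖sm θ‖ ≤ 1 ∧ ‖s θ‖ ≤ 1 := by
    filter_upwards [hUrow, hUrow', hsym_s, hsym_sm, hsym_s', hsym_sm'] with θ hrow hrow'
      hss hsms hss' hsms'
    simp only [neg_neg] at hrow' hss' hsms'
    -- symmetry rewritten
    have h3 : s (-θ) = conj (s θ) := by rw [← hss]; simp
    have h4 : sm (-θ) = conj (sm θ) := by rw [← hsms]; simp
    -- orthogonality at -θ combined with symmetry
    have h2 : sm θ * s (-θ) + s θ * sp (-θ) = 0 := by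
      have := hrow'.2
      rw [hss, hsms] at this
      exact this
    have hone : sm θ * sm (-θ) + s θ * s (-θ) = 1 := by
      rw [h3, h4]; linear_combination hrow.1
    refine ⟨fun n => ?_, ?_, ?_⟩
    · rw [hfdef n θ, hA, hB]
      have he := hfour θ
      linear_combination (-(fourier (-1) θ * u n (-θ))) * h2 +
        (fourier (-1) θ * fourier (-1) (-θ)) * hone + (1 - s θ * c) * he
    · have h1 := hrow.1
      have hsq : Complex.normSq (sm θ) + Complex.normSq (s θ) = 1 := by
        have : ((Complex.normSq (sm θ) : ℂ)) + (Complex.normSq (s θ) : ℂ) = 1 := by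
          rw [← Complex.mul_conj, ← Complex.mul_conj]
          linear_combination h1
        exact_mod_cast this
      have h5 : ‖sm θ‖ ^ 2 = Complex.normSq (sm θ) := Complex.sq_norm _
      nlinarith [norm_nonneg (sm θ), norm_nonneg (s θ), Complex.normSq_nonneg (s θ)]
    · have h1 := hrow.1
      have hsq : Complex.normSq (sm θ) + Complex.normSq (s θ) = 1 := by
        have : ((Complex.normSq (sm θ) : ℂ)) + (Complex.normSq (s θ) : ℂ) = 1 := by
          rw [← Complex.mul_conj, ← Complex.mul_conj]
          linear_combination h1
        exact_mod_cast this
      have h5 : ‖s θ‖ ^ 2 = Complex.normSq (s θ) := Complex.sq_norm _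
      nlinarith [norm_nonneg (sm θ), norm_nonneg (s θ), Complex.normSq_nonneg (sm θ)]
  -- measurability
  have hfc : AEStronglyMeasurable (fun θ : CircleT => (fourier (-1) θ : ℂ)) mT :=
    (map_continuous (fourier (-1))).aestronglyMeasurable
  have hAm : ∀ n, AEStronglyMeasurable (A n) mT := by
    intro n; rw [hA]
    exact (hsL.aestronglyMeasurable.mul (hu n).1.aestronglyMeasurable).sub
      (hfc.mul hsmL.aestronglyMeasurable)
  have hBm : ∀ n, AEStronglyMeasurable (B n) mT := by
    intro n; rw [hB]
    exact (hv n).1.aestronglyMeasurable.sub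
      (hfc.mul (hsL.aestronglyMeasurable.sub aestronglyMeasurable_const))
  have hAmn : ∀ n, AEStronglyMeasurable (fun θ => A n (-θ)) mT := fun n =>
    (hAm n).comp_quasiMeasurePreserving hneg.quasiMeasurePreserving
  have hBmn : ∀ n, AEStronglyMeasurable (fun θ => B n (-θ)) mT := fun n =>
    (hBm n).comp_quasiMeasurePreserving hneg.quasiMeasurePreserving
  -- the norm estimate
  have hbound : ∀ n, eLpNorm (fun θ => s θ * (f n θ - u n θ) - 1) 2 mT ≤
      eLpNorm (A n) 2 mT + eLpNorm (B n) 2 mT := by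
    intro n
    have step1 : eLpNorm (fun θ => s θ * (f n θ - u n θ) - 1) 2 mT ≤
        eLpNorm ((fun θ => ‖A n (-θ)‖) + fun θ => ‖B n (-θ)‖) 2 mT := by
      refine eLpNorm_mono_ae ?_
      filter_upwards [hkey] with θ ⟨hid, hb1, hb2⟩
      rw [hid n]
      calc ‖sm θ * fourier (-1) θ * A n (-θ) + s θ * fourier (-1) θ * B n (-θ)‖
          ≤ ‖sm θ * fourier (-1) θ * A n (-θ)‖ + ‖s θ * fourier (-1) θ * B n (-θ)‖ :=
            norm_add_le _ _
        _ ≤ ‖A n (-θ)‖ + ‖B n (-θ)‖ := by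
            rw [norm_mul, norm_mul, norm_mul, norm_mul, hfnorm θ]
            have ha := norm_nonneg (A n (-θ))
            have hb := norm_nonneg (B n (-θ))
            nlinarith
        _ ≤ ‖(fun θ => ‖A n (-θ)‖) θ + (fun θ => ‖B n (-θ)‖) θ‖ := by
            simp only
            rw [Real.norm_eq_abs, abs_of_nonneg (by positivity)]
    have step2 : eLpNorm ((fun θ => ‖A n (-θ)‖) + fun θ => ‖B n (-θ)‖) 2 mT ≤
        eLpNorm (fun θ => ‖A n (-θ)‖) 2 mT + eLpNorm (fun θ => ‖B n (-θ)‖) 2 mT :=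
      eLpNorm_add_le (hAmn n).norm (hBmn n).norm (by norm_num)
    have e1 : eLpNorm (fun θ => ‖A n (-θ)‖) 2 mT = eLpNorm (A n) 2 mT := by
      rw [eLpNorm_norm]
      exact eLpNorm_comp_measurePreserving (μ := mT) (hAm n) hneg
    have e2 : eLpNorm (fun θ => ‖B n (-θ)‖) 2 mT = eLpNorm (B n) 2 mT := by
      rw [eLpNorm_norm]
      exact eLpNorm_comp_measurePreserving (μ := mT) (hBm n) hneg
    calc eLpNorm (fun θ => s θ * (f n θ - u n θ) - 1) 2 mT
        ≤ _ := step1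
      _ ≤ _ := step2
      _ = eLpNorm (A n) 2 mT + eLpNorm (B n) 2 mT := by rw [e1, e2]
  -- squeeze
  have hsum : Tendsto (fun n => eLpNorm (A n) 2 mT + eLpNorm (B n) 2 mT) atTop (nhds 0) := by
    have := Tendsto.add hu1' hu2'
    simpa using this
  exact tendsto_of_tendsto_of_tendsto_of_le_of_le tendsto_const_nhds hsum
    (fun n => zero_le) hbound
end
end

section
/- Let (s, s₋, s₊) be a scattering matrix with s₋ ∈ H^∞ and ŝ₋(0) = 0, write s(0) = ŝ(0), and suppose u_n ∈ H² satisfy, in L²-norm: s·u_n → t̄·s₋ and P₊(s₊·u_n) → t̄·(s − s(0)). Define f_n ∈ H² by t̄·f_n(t̄) = s(0)·t̄ + t̄·u_n(t̄) − P₋(s₊·u_n). Then s₊·(f_n − u_n) + t̄·u_n(t̄) → 0 in L²-norm. -/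
open MeasureTheory Filter AddCircle
open scoped Real ComplexConjugate

set_option maxHeartbeats 1000000

noncomputable section

/-- In the setting of the paper's second lemma (`s₋ ∈ H^∞`, `ŝ₋(0) = 0`,
`u_n ∈ H²` with `s u_n → t̄ s₋`, `P₊(s₊ u_n) → t̄(s - s(0))`, and `f_n` defined by
`t̄ f_n(t̄) = s(0) t̄ + t̄ u_n(t̄) - P₋(s₊ u_n)`): one has
`s₊·(f_n - u_n) + t̄·u_n(t̄) → 0` in `L²`. -/
theorem statement_8 (s sm sp : CircleT → ℂ)
    (hS : IsSMatrix s sm sp) (hout : IsOuter s)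
    (hsmH : ∀ n : ℤ, n < 0 → fourierCoeff sm n = 0) (hsm0 : fourierCoeff sm 0 = 0)
    (u : ℕ → CircleT → ℂ) (hu : ∀ n, MemH2 (u n))
    (v : ℕ → CircleT → ℂ) (hv : ∀ n, IsRiesz (fun θ => sp θ * u n θ) (v n))
    (hu1 : Tendsto (fun n =>
        eLpNorm (fun θ => s θ * u n θ - fourier (-1) θ * sm θ) 2 mT) atTop (nhds 0))
    (hu2 : Tendsto (fun n =>
        eLpNorm (fun θ => v n θ - fourier (-1) θ * (s θ - fourierCoeff s 0)) 2 mT)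
        atTop (nhds 0))
    (f : ℕ → CircleT → ℂ)
    (hfdef : ∀ n θ, f n θ =
      fourierCoeff s 0 + u n θ - fourier (-1) θ * (sp (-θ) * u n (-θ) - v n (-θ)))
    :
    Tendsto (fun n =>
        eLpNorm (fun θ => sp θ * (f n θ - u n θ) + fourier (-1) θ * u n (-θ)) 2 mT)
      atTop (nhds 0) := by
  obtain ⟨hsI, hsmI, hspI, hunit, hsymS, hsymSm, hsymSp⟩ := hS
  have mpneg : MeasurePreserving (fun θ : CircleT => -θ) mT mT :=
    Measure.measurePreserving_neg mT
  have hqmp := mpneg.quasiMeasurePreserving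
  have hsM := hsI.aestronglyMeasurable
  have hsmM := hsmI.aestronglyMeasurable
  have hspM := hspI.aestronglyMeasurable
  have hfM : AEStronglyMeasurable (fun θ : CircleT => (fourier (-1) θ : ℂ)) mT :=
    (map_continuous (fourier (-1))).aestronglyMeasurable
  have he : ∀ θ : CircleT, (fourier (-1) θ : ℂ) * fourier (-1) (-θ) = 1 := by
    intro θ
    rw [fourier_apply, fourier_apply, ← Circle.coe_mul, ← toCircle_add]
    norm_num
  set s0 : ℂ := fourierCoeff s 0 with hs0
  -- the sequences whose L² norms tend to 0
  set G1 : ℕ → CircleT → ℂ := fun n θ => s θ * u n θ - fourier (-1) θ * sm θ with hG1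
  set G2 : ℕ → CircleT → ℂ := fun n θ => v n θ - fourier (-1) θ * (s θ - s0) with hG2
  have hG1M : ∀ n, AEStronglyMeasurable (G1 n) mT := fun n =>
    (hsM.mul (hu n).1.aestronglyMeasurable).sub (hfM.mul hsmM)
  have hG2M : ∀ n, AEStronglyMeasurable (G2 n) mT := fun n =>
    (hv n).1.aestronglyMeasurable.sub (hfM.mul ((hsM.sub aestronglyMeasurable_const)))
  -- the two pieces
  set A : ℕ → CircleT → ℂ := fun n θ => (fourier (-1) θ * s θ) * G1 n (-θ) with hA
  set B : ℕ → CircleT → ℂ := fun n θ => (fourier (-1) θ * sp θ) * G2 n (-θ) with hB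
  have hG1nM : ∀ n, AEStronglyMeasurable (fun θ : CircleT => G1 n (-θ)) mT := fun n =>
    (hG1M n).comp_quasiMeasurePreserving hqmp
  have hG2nM : ∀ n, AEStronglyMeasurable (fun θ : CircleT => G2 n (-θ)) mT := fun n =>
    (hG2M n).comp_quasiMeasurePreserving hqmp
  have hAM : ∀ n, AEStronglyMeasurable (A n) mT := fun n =>
    (hfM.mul hsM).mul (hG1nM n)
  have hBM : ∀ n, AEStronglyMeasurable (B n) mT := fun n =>
    (hfM.mul hspM).mul (hG2nM n)
  -- the target equals A + B almost everywhere
  have hae : ∀ n, (fun θ => sp θ * (f n θ - u n θ) + fourier (-1) θ * u n (-θ))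
      =ᵐ[mT] fun θ => A n θ + B n θ := by
    intro n
    filter_upwards [hunit, hsymS, hsymSm, hsymSp] with θ hU hcs hcsm hcsp
    -- unitarity relations at θ
    have hMM := Matrix.mem_unitaryGroup_iff.1 hU
    have h11 : (!![sm θ, s θ; s θ, sp θ] * star !![sm θ, s θ; s θ, sp θ]) 1 1
        = (1 : Matrix (Fin 2) (Fin 2) ℂ) 1 1 := by rw [hMM]
    have h01 : (!![sm θ, s θ; s θ, sp θ] * star !![sm θ, s θ; s θ, sp θ]) 0 1
        = (1 : Matrix (Fin 2) (Fin 2) ℂ) 0 1 := by rw [hMM]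
    simp only [Matrix.mul_apply, Fin.sum_univ_two, Matrix.one_apply,
      Matrix.star_eq_conjTranspose, Matrix.conjTranspose_apply, Matrix.cons_val', Matrix.cons_val_zero,
      Matrix.cons_val_one, Matrix.head_cons, Matrix.head_fin_const, Matrix.empty_val',
      Matrix.cons_val_fin_one, if_true, if_false, one_ne_zero, Fin.one_eq_zero_iff,
      Nat.succ_ne_self, ite_true, ite_false] at h11 h01
    have h2 : s θ * conj (s θ) + sp θ * conj (sp θ) = 1 := by simpa using h11
    have h1 : sm θ * conj (s θ) + s θ * conj (sp θ) = 0 := by simpa using h01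
    have h3 : s θ * conj (sm θ) + sp θ * conj (s θ) = 0 := by
      have := congrArg conj h1
      simpa [mul_comm] using this
    -- reflected values in terms of conjugates
    have es : s (-θ) = conj (s θ) := by rw [← hcs, Complex.conj_conj]
    have esm : sm (-θ) = conj (sm θ) := by rw [← hcsm, Complex.conj_conj]
    have esp : sp (-θ) = conj (sp θ) := by rw [← hcsp, Complex.conj_conj]
    have hE : (fourier (-1) θ : ℂ) * fourier (-1) (-θ) = 1 := he θ
    simp only [hA, hB, hG1, hG2, hfdef n θ, es, esm, esp]
    linear_combination (s θ * conj (sm θ) + sp θ * conj (s θ) - sp θ * s0) * hE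
      - (fourier (-1) θ * u n (-θ)) * h2 + h3
  -- norm bounds for A and B
  have hsfin : eLpNorm s ⊤ mT ≠ ⊤ := hsI.2.ne
  have hspfin : eLpNorm sp ⊤ mT ≠ ⊤ := hspI.2.ne
  have hAle : ∀ n, eLpNorm (A n) 2 mT ≤ eLpNorm s ⊤ mT * eLpNorm (G1 n) 2 mT := by
    intro n
    have h1 : A n = (fun θ => fourier (-1) θ * s θ) • (fun θ : CircleT => G1 n (-θ)) := by
      funext θ; simp [hA, smul_eq_mul]
    have h2 := eLpNorm_smul_le_eLpNorm_top_mul_eLpNorm 2 (hG1nM n)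
      (fun θ : CircleT => fourier (-1) θ * s θ)
    rw [← h1] at h2
    have h3 : eLpNorm (fun θ : CircleT => (fourier (-1) θ : ℂ) * s θ) ⊤ mT
        = eLpNorm s ⊤ mT := by
      apply eLpNorm_congr_norm_ae
      filter_upwards with θ
      simp [Circle.norm_coe]
    have h4' : eLpNorm ((G1 n) ∘ (fun θ : CircleT => -θ)) 2 mT = eLpNorm (G1 n) 2 mT :=
      eLpNorm_comp_measurePreserving (hG1M n) mpneg
    have h4 : eLpNorm (fun θ : CircleT => G1 n (-θ)) 2 mT = eLpNorm (G1 n) 2 mT := h4'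
    rw [h3, h4] at h2
    exact h2
  have hBle : ∀ n, eLpNorm (B n) 2 mT ≤ eLpNorm sp ⊤ mT * eLpNorm (G2 n) 2 mT := by
    intro n
    have h1 : B n = (fun θ => fourier (-1) θ * sp θ) • (fun θ : CircleT => G2 n (-θ)) := by
      funext θ; simp [hB, smul_eq_mul]
    have h2 := eLpNorm_smul_le_eLpNorm_top_mul_eLpNorm 2 (hG2nM n)
      (fun θ : CircleT => fourier (-1) θ * sp θ)
    rw [← h1] at h2
    have h3 : eLpNorm (fun θ : CircleT => (fourier (-1) θ : ℂ) * sp θ) ⊤ mT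
        = eLpNorm sp ⊤ mT := by
      apply eLpNorm_congr_norm_ae
      filter_upwards with θ
      simp [Circle.norm_coe]
    have h4' : eLpNorm ((G2 n) ∘ (fun θ : CircleT => -θ)) 2 mT = eLpNorm (G2 n) 2 mT :=
      eLpNorm_comp_measurePreserving (hG2M n) mpneg
    have h4 : eLpNorm (fun θ : CircleT => G2 n (-θ)) 2 mT = eLpNorm (G2 n) 2 mT := h4'
    rw [h3, h4] at h2
    exact h2
  -- combine
  have hbound : ∀ n,
      eLpNorm (fun θ => sp θ * (f n θ - u n θ) + fourier (-1) θ * u n (-θ)) 2 mT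
        ≤ eLpNorm s ⊤ mT * eLpNorm (G1 n) 2 mT + eLpNorm sp ⊤ mT * eLpNorm (G2 n) 2 mT := by
    intro n
    calc eLpNorm (fun θ => sp θ * (f n θ - u n θ) + fourier (-1) θ * u n (-θ)) 2 mT
        = eLpNorm (fun θ => A n θ + B n θ) 2 mT := eLpNorm_congr_ae (hae n)
      _ ≤ eLpNorm (A n) 2 mT + eLpNorm (B n) 2 mT :=
          eLpNorm_add_le (hAM n) (hBM n) one_le_two
      _ ≤ _ := add_le_add (hAle n) (hBle n)
  have hlim : Tendsto (fun n =>
      eLpNorm s ⊤ mT * eLpNorm (G1 n) 2 mT + eLpNorm sp ⊤ mT * eLpNorm (G2 n) 2 mT)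
      atTop (nhds 0) := by
    have t1 : Tendsto (fun n => eLpNorm s ⊤ mT * eLpNorm (G1 n) 2 mT) atTop (nhds 0) := by
      have := ENNReal.Tendsto.const_mul (a := eLpNorm s ⊤ mT) hu1 (Or.inr hsfin)
      simpa only [mul_zero] using this
    have t2 : Tendsto (fun n => eLpNorm sp ⊤ mT * eLpNorm (G2 n) 2 mT) atTop (nhds 0) := by
      have := ENNReal.Tendsto.const_mul (a := eLpNorm sp ⊤ mT) hu2 (Or.inr hspfin)
      simpa only [mul_zero] using this
    simpa using t1.add t2
  exact tendsto_of_tendsto_of_tendsto_of_le_of_le tendsto_const_nhds hlim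
    (fun n => zero_le) hbound
end
end

section
/- Let s, s₋, s₊ ∈ L^∞(𝕋) form a unitary symmetric S-matrix. Then for every f ∈ L²: ⟨ f + t̄·(s₊ f)(t̄), f ⟩ = (1/2)·( ‖s·f‖²_{L²} + ‖ t̄·f(t̄) + s₊·f ‖²_{L²} ); in particular the left-hand side is real and nonnegative. -/
open MeasureTheory Filter AddCircle
open scoped Real ComplexConjugate

noncomputable section

/-- conjugation preserves MemLp -/
lemma memLp_conj {g : CircleT → ℂ} {p : ENNReal} (hg : MemLp g p mT) :
    MemLp (fun θ => conj (g θ)) p mT := by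
  refine ⟨Complex.continuous_conj.comp_aestronglyMeasurable hg.1, ?_⟩
  have : eLpNorm (fun θ => conj (g θ)) p mT ≤ eLpNorm g p mT :=
    eLpNorm_mono fun x => by simp
  exact lt_of_le_of_lt this hg.2

/-- product of two L² functions is integrable -/
lemma int_mul {g h : CircleT → ℂ} (hg : MemLp g 2 mT) (hh : MemLp h 2 mT) :
    Integrable (fun θ => g θ * h θ) mT := by
  have h1 : MemLp (g • h) 1 mT := by
    exact hh.smul hg
  rw [memLp_one_iff_integrable] at h1
  exact h1

lemma memLp_e : MemLp (fun θ : CircleT => (fourier (-1) θ : ℂ)) ⊤ mT := by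
  refine memLp_top_of_bound ((fourier (-1)).continuous.aestronglyMeasurable) 1 ?_
  filter_upwards with x
  rw [fourier_apply]
  exact le_of_eq (Circle.norm_coe _)


set_option maxHeartbeats 1000000 in
/-- For a unitary symmetric S-matrix `(s, s₋, s₊)` and every `f ∈ L²`:
`⟨f + t̄ (s₊ f)(t̄), f⟩ = ½ (‖s f‖² + ‖t̄ f(t̄) + s₊ f‖²)`; in particular the left-hand side
is real and nonnegative. -/
theorem statement_9 (s sm sp : CircleT → ℂ) (hS : IsSMatrix s sm sp)
    (f : CircleT → ℂ) (hf : MemLp f 2 mT) :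
    (∫ θ, (f θ + fourier (-1) θ * sp (-θ) * f (-θ)) * conj (f θ) ∂mT)
        = (((1 : ℝ) / 2 * ((∫ θ, ‖s θ * f θ‖ ^ 2 ∂mT)
            + ∫ θ, ‖fourier (-1) θ * f (-θ) + sp θ * f θ‖ ^ 2 ∂mT) : ℝ) : ℂ) ∧
    (∫ θ, (f θ + fourier (-1) θ * sp (-θ) * f (-θ)) * conj (f θ) ∂mT).im = 0 ∧
    0 ≤ (∫ θ, (f θ + fourier (-1) θ * sp (-θ) * f (-θ)) * conj (f θ) ∂mT).re := by
  obtain ⟨hs, hsm, hsp, hU, hssym, hsmsym, hspsym⟩ := hS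
  set e : CircleT → ℂ := fun θ => (fourier (-1) θ : ℂ) with he_def
  have hneg : MeasurePreserving (fun θ : CircleT => -θ) mT mT :=
    Measure.measurePreserving_neg mT
  -- basic pointwise e facts
  have he_norm : ∀ θ, ‖e θ‖ = 1 := fun θ => by
    rw [he_def]; simp only; rw [fourier_apply]; exact Circle.norm_coe _
  have he_conj_mul : ∀ θ, conj (e θ) * e θ = 1 := fun θ => by
    rw [← Complex.normSq_eq_conj_mul_self, Complex.normSq_eq_norm_sq,
      he_norm]
    norm_num
  have he_neg : ∀ θ, conj (e (-θ)) = e θ := fun θ => by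
    rw [he_def]
    simp only
    have h1 : (fourier (-1) (-θ) : ℂ) = fourier 1 θ := by
      rw [fourier_apply, fourier_apply]; norm_num
    rw [h1, ← fourier_neg]
  -- MemLp facts
  have hfm : MemLp (fun θ => f (-θ)) 2 mT := hf.comp_measurePreserving hneg
  have hcf : MemLp (fun θ => conj (f θ)) 2 mT := memLp_conj hf
  have hcfm : MemLp (fun θ => conj (f (-θ))) 2 mT := memLp_conj hfm
  have hspf : MemLp (fun θ => sp θ * f θ) 2 mT := by
    have h : MemLp (sp • f) 2 mT := hf.smul hsp
    exact h
  have hspmfm : MemLp (fun θ => sp (-θ) * f (-θ)) 2 mT :=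
    hspf.comp_measurePreserving hneg
  have hefm : MemLp (fun θ => e θ * f (-θ)) 2 mT := by
    have h : MemLp (e • fun θ => f (-θ)) 2 mT := hfm.smul memLp_e
    exact h
  have hespfm : MemLp (fun θ => e θ * (sp (-θ) * f (-θ))) 2 mT := by
    have h : MemLp (e • fun θ => sp (-θ) * f (-θ)) 2 mT := hspmfm.smul memLp_e
    exact h
  have hcspf : MemLp (fun θ => conj (sp θ) * conj (f θ)) 2 mT := by
    have h := memLp_conj hspf
    simpa [map_mul] using h
  -- conj of products
  have hcefm : MemLp (fun θ => conj (e θ) * conj (f (-θ))) 2 mT := by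
    have h := memLp_conj hefm
    simpa [map_mul] using h
  -- unitarity: |s|² + |sp|² = 1 a.e.
  have hunit : ∀ᵐ θ ∂mT, conj (s θ) * s θ + conj (sp θ) * sp θ = 1 := by
    filter_upwards [hU] with θ hθ
    have h1 : star !![sm θ, s θ; s θ, sp θ] * !![sm θ, s θ; s θ, sp θ] = 1 :=
      (Unitary.mem_iff.mp hθ).1
    have h2 := Matrix.ext_iff.2 h1 1 1
    simpa [Matrix.mul_apply, Fin.sum_univ_two, Matrix.star_eq_conjTranspose,
      Matrix.conjTranspose_apply] using h2
  -- symmetry transported by θ ↦ -θ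
  have hspsym' : ∀ᵐ θ ∂mT, conj (sp θ) = sp (-θ) := by
    have h := hneg.quasiMeasurePreserving.tendsto_ae.eventually hspsym
    filter_upwards [h] with θ hθ
    simpa using hθ
  -- real-cast of squared-norm integrals
  have cast_sq : ∀ g : CircleT → ℂ,
      ((∫ θ, ‖g θ‖ ^ 2 ∂mT : ℝ) : ℂ) = ∫ θ, g θ * conj (g θ) ∂mT := by
    intro g
    have h1 : (∫ θ, g θ * conj (g θ) ∂mT) = ∫ θ, ((‖g θ‖ ^ 2 : ℝ) : ℂ) ∂mT := by
      refine integral_congr_ae (Eventually.of_forall fun θ => ?_)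
      beta_reduce
      rw [Complex.mul_conj']
      push_cast
      ring
    rw [h1]
    exact integral_ofReal.symm
  -- abbreviations
  set N : ℂ := ∫ θ, f θ * conj (f θ) ∂mT with hNdef
  set A : ℂ := ∫ θ, e θ * sp (-θ) * f (-θ) * conj (f θ) ∂mT with hAdef
  -- integrability of all products
  have iN : Integrable (fun θ => f θ * conj (f θ)) mT := int_mul hf hcf
  have iA : Integrable (fun θ => e θ * sp (-θ) * f (-θ) * conj (f θ)) mT := by
    have h := int_mul hespfm hcf
    simpa [mul_assoc] using h
  have iG : Integrable (fun θ => (s θ * f θ) * conj (s θ * f θ)) mT := by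
    have hsf : MemLp (fun θ => s θ * f θ) 2 mT := by
      have h : MemLp (s • f) 2 mT := hf.smul hs
      exact h
    exact int_mul hsf (memLp_conj hsf)
  have iT1 : Integrable (fun θ => (e θ * f (-θ)) * conj (e θ * f (-θ))) mT :=
    int_mul hefm (memLp_conj hefm)
  have iT2 : Integrable (fun θ => (e θ * f (-θ)) * (conj (sp θ) * conj (f θ))) mT :=
    int_mul hefm hcspf
  have iT3 : Integrable (fun θ => (sp θ * f θ) * (conj (e θ) * conj (f (-θ)))) mT :=
    int_mul hspf hcefm
  have iT4 : Integrable (fun θ => (sp θ * f θ) * conj (sp θ * f θ)) mT :=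
    int_mul hspf (memLp_conj hspf)
  -- T1 value
  have hT1 : (∫ θ, (e θ * f (-θ)) * conj (e θ * f (-θ)) ∂mT) = N := by
    rw [hNdef, ← integral_neg_eq_self (fun θ => f θ * conj (f θ)) mT]
    refine integral_congr_ae (Eventually.of_forall fun θ => ?_)
    have h : (e θ * f (-θ)) * conj (e θ * f (-θ))
        = (conj (e θ) * e θ) * (f (-θ) * conj (f (-θ))) := by
      rw [map_mul]; ring
    show (e θ * f (-θ)) * conj (e θ * f (-θ)) = f (-θ) * conj (f (-θ))
    rw [h, he_conj_mul, one_mul]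
  -- T2 value
  have hT2 : (∫ θ, (e θ * f (-θ)) * (conj (sp θ) * conj (f θ)) ∂mT) = A := by
    rw [hAdef]
    refine integral_congr_ae ?_
    filter_upwards [hspsym'] with θ hθ
    rw [hθ]; ring
  -- T3 value : conj A
  have hT3 : (∫ θ, (sp θ * f θ) * (conj (e θ) * conj (f (-θ))) ∂mT) = conj A := by
    rw [← hT2, ← integral_conj]
    refine integral_congr_ae (Eventually.of_forall fun θ => ?_)
    simp only [map_mul, Complex.conj_conj]
    ring
  -- A is real : conj A = A
  have hAconj : conj A = A := by
    have h1 : conj A = ∫ θ, conj (e θ * sp (-θ) * f (-θ) * conj (f θ)) ∂mT := by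
      rw [hAdef, ← integral_conj]
    have h2 : (∫ θ, conj (e θ * sp (-θ) * f (-θ) * conj (f θ)) ∂mT)
        = ∫ θ, conj (e θ) * sp θ * conj (f (-θ)) * f θ ∂mT := by
      refine integral_congr_ae ?_
      filter_upwards [hspsym] with θ hθ
      simp only [map_mul, Complex.conj_conj, hθ]
    have h3 : (∫ θ, conj (e θ) * sp θ * conj (f (-θ)) * f θ ∂mT)
        = ∫ θ, conj (e (-θ)) * sp (-θ) * conj (f (-(-θ))) * f (-θ) ∂mT :=
      (integral_neg_eq_self (fun θ => conj (e θ) * sp θ * conj (f (-θ)) * f θ) mT).symm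
    have h4 : (∫ θ, conj (e (-θ)) * sp (-θ) * conj (f (-(-θ))) * f (-θ) ∂mT) = A := by
      rw [hAdef]
      refine integral_congr_ae (Eventually.of_forall fun θ => ?_)
      show conj (e (-θ)) * sp (-θ) * conj (f (- -θ)) * f (-θ)
          = e θ * sp (-θ) * f (-θ) * conj (f θ)
      rw [he_neg, neg_neg]; ring
    rw [h1, h2, h3, h4]
  -- G + T4 = N  (unitarity)
  have hGT4 : (∫ θ, (s θ * f θ) * conj (s θ * f θ) ∂mT)
      + (∫ θ, (sp θ * f θ) * conj (sp θ * f θ) ∂mT) = N := by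
    rw [hNdef, ← integral_add iG iT4]
    refine integral_congr_ae ?_
    filter_upwards [hunit] with θ hθ
    simp only [map_mul]
    linear_combination (f θ * conj (f θ)) * hθ
  -- expansion of ‖e f(-·) + sp f‖² integral
  have hHsum : (∫ θ, (e θ * f (-θ) + sp θ * f θ) * conj (e θ * f (-θ) + sp θ * f θ) ∂mT)
      = (∫ θ, (e θ * f (-θ)) * conj (e θ * f (-θ)) ∂mT)
        + (∫ θ, (e θ * f (-θ)) * (conj (sp θ) * conj (f θ)) ∂mT)
        + (∫ θ, (sp θ * f θ) * (conj (e θ) * conj (f (-θ))) ∂mT)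
        + (∫ θ, (sp θ * f θ) * conj (sp θ * f θ) ∂mT) := by
    have h1 : (∫ θ, (e θ * f (-θ) + sp θ * f θ) * conj (e θ * f (-θ) + sp θ * f θ) ∂mT)
        = ∫ θ, ((e θ * f (-θ)) * conj (e θ * f (-θ))
            + (e θ * f (-θ)) * (conj (sp θ) * conj (f θ))
            + (sp θ * f θ) * (conj (e θ) * conj (f (-θ)))
            + (sp θ * f θ) * conj (sp θ * f θ)) ∂mT := by
      refine integral_congr_ae (Eventually.of_forall fun θ => ?_)
      beta_reduce
      simp only [map_add, map_mul]
      ring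
    have i12 : Integrable (fun θ => (e θ * f (-θ)) * conj (e θ * f (-θ))
        + (e θ * f (-θ)) * (conj (sp θ) * conj (f θ))) mT := iT1.add iT2
    have i123 : Integrable (fun θ => (e θ * f (-θ)) * conj (e θ * f (-θ))
        + (e θ * f (-θ)) * (conj (sp θ) * conj (f θ))
        + (sp θ * f θ) * (conj (e θ) * conj (f (-θ)))) mT := i12.add iT3
    have s1 : (∫ θ, ((e θ * f (-θ)) * conj (e θ * f (-θ))
            + (e θ * f (-θ)) * (conj (sp θ) * conj (f θ))
            + (sp θ * f θ) * (conj (e θ) * conj (f (-θ)))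
            + (sp θ * f θ) * conj (sp θ * f θ)) ∂mT)
        = (∫ θ, ((e θ * f (-θ)) * conj (e θ * f (-θ))
            + (e θ * f (-θ)) * (conj (sp θ) * conj (f θ))
            + (sp θ * f θ) * (conj (e θ) * conj (f (-θ)))) ∂mT)
          + ∫ θ, (sp θ * f θ) * conj (sp θ * f θ) ∂mT := integral_add i123 iT4
    have s2 : (∫ θ, ((e θ * f (-θ)) * conj (e θ * f (-θ))
            + (e θ * f (-θ)) * (conj (sp θ) * conj (f θ))
            + (sp θ * f θ) * (conj (e θ) * conj (f (-θ)))) ∂mT)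
        = (∫ θ, ((e θ * f (-θ)) * conj (e θ * f (-θ))
            + (e θ * f (-θ)) * (conj (sp θ) * conj (f θ))) ∂mT)
          + ∫ θ, (sp θ * f θ) * (conj (e θ) * conj (f (-θ))) ∂mT := integral_add i12 iT3
    have s3 : (∫ θ, ((e θ * f (-θ)) * conj (e θ * f (-θ))
            + (e θ * f (-θ)) * (conj (sp θ) * conj (f θ))) ∂mT)
        = (∫ θ, (e θ * f (-θ)) * conj (e θ * f (-θ)) ∂mT)
          + ∫ θ, (e θ * f (-θ)) * (conj (sp θ) * conj (f θ)) ∂mT := integral_add iT1 iT2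
    rw [h1, s1, s2, s3]
  -- the LHS equals N + A
  have hJ : (∫ θ, (f θ + fourier (-1) θ * sp (-θ) * f (-θ)) * conj (f θ) ∂mT) = N + A := by
    rw [hNdef, hAdef, ← integral_add iN iA]
    refine integral_congr_ae (Eventually.of_forall fun θ => ?_)
    simp only [he_def]
    ring
  -- cast identities
  have hG : ((∫ θ, ‖s θ * f θ‖ ^ 2 ∂mT : ℝ) : ℂ)
      = ∫ θ, (s θ * f θ) * conj (s θ * f θ) ∂mT := cast_sq _
  have hH : ((∫ θ, ‖fourier (-1) θ * f (-θ) + sp θ * f θ‖ ^ 2 ∂mT : ℝ) : ℂ)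
      = ∫ θ, (e θ * f (-θ) + sp θ * f θ) * conj (e θ * f (-θ) + sp θ * f θ) ∂mT := by
    have h := cast_sq (fun θ => e θ * f (-θ) + sp θ * f θ)
    simpa [he_def] using h
  -- assemble the main identity
  have hsum : ((∫ θ, ‖s θ * f θ‖ ^ 2 ∂mT : ℝ) : ℂ)
      + ((∫ θ, ‖fourier (-1) θ * f (-θ) + sp θ * f θ‖ ^ 2 ∂mT : ℝ) : ℂ)
      = 2 * (N + A) := by
    rw [hG, hH, hHsum, hT1, hT2, hT3, hAconj]
    linear_combination hGT4
  have key : (∫ θ, (f θ + fourier (-1) θ * sp (-θ) * f (-θ)) * conj (f θ) ∂mT)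
      = (((1 : ℝ) / 2 * ((∫ θ, ‖s θ * f θ‖ ^ 2 ∂mT)
          + ∫ θ, ‖fourier (-1) θ * f (-θ) + sp θ * f θ‖ ^ 2 ∂mT) : ℝ) : ℂ) := by
    rw [hJ]
    push_cast
    rw [hsum]
    ring
  refine ⟨key, ?_, ?_⟩
  · rw [key]; exact Complex.ofReal_im _
  · rw [key, Complex.ofReal_re]
    have hX : 0 ≤ ∫ θ, ‖s θ * f θ‖ ^ 2 ∂mT :=
      integral_nonneg fun θ => sq_nonneg _
    have hY : 0 ≤ ∫ θ, ‖fourier (-1) θ * f (-θ) + sp θ * f θ‖ ^ 2 ∂mT :=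
      integral_nonneg fun θ => sq_nonneg _
    positivity
end
end

section
/- Let s, s₋, s₊ ∈ L^∞(𝕋) form a unitary symmetric S-matrix with s(t) ≠ 0 for a.e. t ∈ 𝕋. If f⁺, f⁻ ∈ L² satisfy s(t)·f⁻(t) = t̄·f⁺(t̄) + s₊(t)·f⁺(t) for a.e. t ∈ 𝕋, then s(t)·f⁺(t) = t̄·f⁻(t̄) + s₋(t)·f⁻(t) for a.e. t ∈ 𝕋. -/
open MeasureTheory Filter AddCircle
open scoped Real ComplexConjugate

noncomputable section

/-- transfer an a.e. property along `θ ↦ -θ`. -/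
lemma ae_neg {p : CircleT → Prop} (h : ∀ᵐ θ ∂mT, p θ) : ∀ᵐ θ ∂mT, p (-θ) :=
  (Measure.measurePreserving_neg mT).quasiMeasurePreserving.ae h

lemma fourier_mul_fourier_neg (θ : CircleT) :
    fourier (-1) θ * fourier (-1) (-θ) = 1 := by
  have h1 : fourier (-1) (-θ) = fourier 1 θ := by
    rw [fourier_apply, fourier_apply]
    congr 1
    simp
    rfl
  rw [h1, ← fourier_add]
  simpa using (fourier_zero (x := θ))

/-- For a unitary symmetric S-matrix with `s ≠ 0` a.e.: if `f⁺, f⁻ ∈ L²`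
satisfy `s f⁻ = t̄ f⁺(t̄) + s₊ f⁺` a.e., then `s f⁺ = t̄ f⁻(t̄) + s₋ f⁻` a.e. -/
theorem statement_10 (s sm sp : CircleT → ℂ) (hS : IsSMatrix s sm sp)
    (hs0 : ∀ᵐ θ ∂mT, s θ ≠ 0)
    (fp fm : CircleT → ℂ) (hfp : MemLp fp 2 mT) (hfm : MemLp fm 2 mT)
    (hrel : ∀ᵐ θ ∂mT, s θ * fm θ = fourier (-1) θ * fp (-θ) + sp θ * fp θ) :
    ∀ᵐ θ ∂mT, s θ * fp θ = fourier (-1) θ * fm (-θ) + sm θ * fm θ := by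
  obtain ⟨-, -, -, hU, hsymS, hsymSm, hsymSp⟩ := hS
  have hrel' := ae_neg hrel
  filter_upwards [hU, hsymS, hsymSp, hs0, hrel, hrel'] with θ hUθ hsS hsP ha h1 h2
  have hMM : (!![sm θ, s θ; s θ, sp θ] : Matrix (Fin 2) (Fin 2) ℂ) *
      star !![sm θ, s θ; s θ, sp θ] = 1 := hUθ.2
  have h3 : sm θ * conj (sm θ) + s θ * conj (s θ) = 1 := by
    have := congrFun (congrFun hMM 0) 0
    simpa [Matrix.mul_apply, Fin.sum_univ_succ, Matrix.one_apply, Matrix.star_apply,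
      Matrix.conjTranspose_apply] using this
  have h4 : sm θ * conj (s θ) + s θ * conj (sp θ) = 0 := by
    have := congrFun (congrFun hMM 0) 1
    simpa [Matrix.mul_apply, Fin.sum_univ_succ, Matrix.one_apply, Matrix.star_apply,
      Matrix.conjTranspose_apply] using this
  have h6 : s θ * conj (s θ) + sp θ * conj (sp θ) = 1 := by
    have := congrFun (congrFun hMM 1) 1
    simpa [Matrix.mul_apply, Fin.sum_univ_succ, Matrix.one_apply, Matrix.star_apply,
      Matrix.conjTranspose_apply] using this
  have h5 : fourier (-1) θ * fourier (-1) (-θ) = 1 := fourier_mul_fourier_neg θ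
  -- rewrite the relation at `-θ` using the symmetry
  have hsS' : s (-θ) = conj (s θ) := by rw [← hsS]; simp
  have hsP' : sp (-θ) = conj (sp θ) := by rw [← hsP]; simp
  have h2' : conj (s θ) * fm (-θ) = fourier (-1) (-θ) * fp θ + conj (sp θ) * fp (-θ) := by
    rw [hsS', hsP', neg_neg] at h2
    exact h2
  have ha' : conj (s θ) ≠ 0 := by
    simpa using (star_ne_zero.mpr ha : (starRingEnd ℂ) (s θ) ≠ 0)
  set a := s θ
  set b := sp θ
  set c := sm θ
  set e := fourier (-1) θ
  set e' := fourier (-1) (-θ)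
  set F := fp θ
  set G := fm θ
  set F' := fp (-θ)
  set G' := fm (-θ)
  have key : a * conj a * (a * F) = a * conj a * (e * G' + c * G) := by
    linear_combination (-(a * e)) * h2' + (-(conj a * c)) * h1 +
      (-(e * F' + b * F)) * h4 + (-(a * F)) * h5 + (a * F) * h6
  exact mul_left_cancel₀ (mul_ne_zero ha ha') key
end
end
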